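/- The entries of W satisfy W₁₁ = f_{α−1}(M,λ̃) + z·g_{α−1}(M,λ̃) and W₁₂ = g_{α−1}(M,λ̃); equivalently, W₁₁ − z·W₁₂ = f_{α−1}(M,λ̃) (so the Riley polynomial W₁₁ − z·W₁₂ of G(ε) equals f_{α−1}). -/

import Mathlib

abbrev Mat := Matrix (Fin 2) (Fin 2) ℂ

/-- Admissibility of a tuple `i : Fin k → ℕ`: strictly increasing, values in `[1, n]`,
and the `j`-th entry (0-based) has parity `(j + start) % 2`.  `start = 1` gives the
"odd-start admissible" tuples (`i_j` odd for odd 1-based positions `j`), while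
`start = 0` gives the "even-start admissible" tuples. -/
def Adm (n k start : ℕ) (i : Fin k → ℕ) : Prop :=
  (∀ j j' : Fin k, j < j' → i j < i j') ∧
  (∀ j : Fin k, 1 ≤ i j ∧ i j ≤ n) ∧
  (∀ j : Fin k, i j % 2 = (j.val + start) % 2)

instance (n k start : ℕ) : DecidablePred (Adm n k start) := fun _ => by
  unfold Adm; infer_instance

/-- `ĥ(i₁,…,i_k)`: the signed sum of the `ε_t`, `1 ≤ t ≤ n`, omitting the `t` lying in
the tuple, where `ε_t` gets the sign `(−1)^{#{j : i_j < t}}`; this agrees with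
`(ε₁+⋯+ε_{i₁−1}) − (ε_{i₁+1}+⋯+ε_{i₂−1}) + ⋯ + (−1)^k (ε_{i_k+1}+⋯+ε_n)`. -/
def hatSum (n : ℕ) (ε : ℕ → ℤ) {k : ℕ} (i : Fin k → ℕ) : ℤ :=
  ∑ t ∈ Finset.Icc 1 n,
    if ∃ j, i j = t then 0
    else (-1) ^ (Finset.univ.filter fun j : Fin k => i j < t).card * ε t

/-- `ĥᵃˡᵗ(i₁,…,i_k)`: the alternating sum (signs −,+,−,+,… in increasing order)
of the `ε_t`, `1 ≤ t ≤ n`, with `t` not in the tuple. -/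
def hatAltSum (n : ℕ) (ε : ℕ → ℤ) {k : ℕ} (i : Fin k → ℕ) : ℤ :=
  ∑ t ∈ Finset.Icc 1 n,
    if ∃ j, i j = t then 0
    else (-1) ^ ((Finset.Icc 1 t).filter fun s => ¬∃ j, i j = s).card * ε t

/-- `c_k^n(M, ε) = Σ ε_{i₁}⋯ε_{i_k}·M^{ĥ(i₁,…,i_k)}` over odd-start admissible tuples.
For `k = 0` this is `M^{ε₁+⋯+ε_n}`, and it vanishes for `k > n`. -/
noncomputable def cP (n k : ℕ) (ε : ℕ → ℤ) (M : ℂ) : ℂ :=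
  ∑ i : Fin k → Fin (n + 1),
    if Adm n k 1 (fun j => (i j : ℕ))
    then (∏ j : Fin k, (ε (i j : ℕ) : ℂ)) * M ^ hatSum n ε (fun j => (i j : ℕ))
    else 0

/-- `d_k^n(M, ε) = Σ ε_{i₁}⋯ε_{i_k}·M^{−ĥ(i₁,…,i_k)}` over even-start admissible tuples.
For `k = 0` this is `M^{−(ε₁+⋯+ε_n)}`, and it vanishes for `k > n`. -/
noncomputable def dP (n k : ℕ) (ε : ℕ → ℤ) (M : ℂ) : ℂ :=
  ∑ i : Fin k → Fin (n + 1),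
    if Adm n k 0 (fun j => (i j : ℕ))
    then (∏ j : Fin k, (ε (i j : ℕ) : ℂ)) * M ^ (-hatSum n ε (fun j => (i j : ℕ)))
    else 0

/-- `c̃_k^n(M, ε) = Σ ε_{i₁}⋯ε_{i_k}·M^{ĥᵃˡᵗ(i₁,…,i_k)}` over odd-start admissible
tuples.  For `k = 0` this is `M^{−ε₁+ε₂−⋯+(−1)ⁿ εₙ}`, it equals `1` for `k = n = 0`,
and it vanishes for `k > n`. -/
noncomputable def cT (n k : ℕ) (ε : ℕ → ℤ) (M : ℂ) : ℂ :=
  ∑ i : Fin k → Fin (n + 1),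
    if Adm n k 1 (fun j => (i j : ℕ))
    then (∏ j : Fin k, (ε (i j : ℕ) : ℂ)) * M ^ hatAltSum n ε (fun j => (i j : ℕ))
    else 0

/-- `d̃_k^n(M, ε) = Σ ε_{i₁}⋯ε_{i_k}·M^{−ĥᵃˡᵗ(i₁,…,i_k)}` over even-start admissible
tuples. -/
noncomputable def dT (n k : ℕ) (ε : ℕ → ℤ) (M : ℂ) : ℂ :=
  ∑ i : Fin k → Fin (n + 1),
    if Adm n k 0 (fun j => (i j : ℕ))
    then (∏ j : Fin k, (ε (i j : ℕ) : ℂ)) * M ^ (-hatAltSum n ε (fun j => (i j : ℕ)))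
    else 0

/-- The word `W = X^{ε₁} Y^{ε₂} X^{ε₃} Y^{ε₄} ⋯ X^{ε_{α−2}} Y^{ε_{α−1}}`
(letters with odd index are powers of `X`, even index powers of `Y`). -/
noncomputable def Wword (α : ℕ) (ε : ℕ → ℤ) (X Y : Mat) : Mat :=
  ((List.range (α - 1)).map fun i =>
    (if (i + 1) % 2 = 1 then X else Y) ^ ε (i + 1)).prod

-- ### helpers
noncomputable def term (n : ℕ) (ε : ℕ → ℤ) (M : ℂ) (k : ℕ) (i : Fin k → ℕ) : ℂ :=
  if Adm n k 1 i then (∏ j : Fin k, (ε (i j) : ℂ)) * M ^ hatAltSum n ε i else 0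

lemma adm_lb {n k start : ℕ} {i : Fin k → ℕ} (h : Adm n k start i) :
    ∀ m (hm : m < k), m + 1 ≤ i ⟨m, hm⟩ := by
  intro m
  induction m with
  | zero => intro hm; exact (h.2.1 ⟨0, hm⟩).1
  | succ m ih =>
      intro hm
      have h1 := ih (Nat.lt_of_succ_lt hm)
      have h2 := h.1 ⟨m, Nat.lt_of_succ_lt hm⟩ ⟨m + 1, hm⟩ (by simp [Fin.lt_def])
      omega

lemma adm_k_le {n k start : ℕ} {i : Fin k → ℕ} (h : Adm n k start i) : k ≤ n := by
  rcases Nat.eq_zero_or_pos k with hk | hk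
  · omega
  · have h1 := adm_lb h (k - 1) (by omega)
    have h2 := (h.2.1 ⟨k - 1, by omega⟩).2
    omega

lemma adm_inj {n k start : ℕ} {i : Fin k → ℕ} (h : Adm n k start i) :
    Function.Injective i := by
  intro a b hab
  rcases lt_trichotomy a b with hlt | heq | hlt
  · have := h.1 a b hlt; omega
  · exact heq
  · have := h.1 b a hlt; omega

lemma cT_eq_pi (n k : ℕ) (ε : ℕ → ℤ) (M : ℂ) :
    cT n k ε M = ∑ i ∈ Fintype.piFinset (fun _ : Fin k => Finset.range (n + 1)),
      term n ε M k i := by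
  have himg : Finset.image (fun (i : Fin k → Fin (n + 1)) (j : Fin k) => (i j : ℕ))
      Finset.univ = Fintype.piFinset (fun _ : Fin k => Finset.range (n + 1)) := by
    ext g
    simp only [Finset.mem_image, Fintype.mem_piFinset, Finset.mem_range, Finset.mem_univ,
      true_and]
    constructor
    · rintro ⟨i, rfl⟩ j; exact (i j).isLt
    · intro hg; exact ⟨fun j => ⟨g j, hg j⟩, rfl⟩
  rw [← himg, Finset.sum_image]
  · rfl
  · intro x _ y _ hxy
    funext j
    exact Fin.val_injective (congrFun hxy j)

lemma cT_eq_pi' (n k N : ℕ) (hN : n + 1 ≤ N) (ε : ℕ → ℤ) (M : ℂ) :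
    cT n k ε M = ∑ i ∈ Fintype.piFinset (fun _ : Fin k => Finset.range N),
      term n ε M k i := by
  rw [cT_eq_pi]
  apply Finset.sum_subset
  · intro i hi
    simp only [Fintype.mem_piFinset, Finset.mem_range] at hi ⊢
    intro j; exact lt_of_lt_of_le (hi j) hN
  · intro i _ hi
    simp only [Fintype.mem_piFinset, Finset.mem_range, not_forall] at hi
    obtain ⟨j, hj⟩ := hi
    rw [term, if_neg]
    intro hA
    exact hj (by have := (hA.2.1 j).2; omega)

lemma cT_of_gt {n k : ℕ} (h : n < k) (ε : ℕ → ℤ) (M : ℂ) : cT n k ε M = 0 := by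
  rw [cT]
  apply Finset.sum_eq_zero
  intro i _
  rw [if_neg]
  intro hA
  exact absurd (adm_k_le hA) (by omega)

lemma Icc1succ (n : ℕ) : Finset.Icc 1 (n + 1) = insert (n + 1) (Finset.Icc 1 n) := by
  ext t
  simp only [Finset.mem_Icc, Finset.mem_insert]
  omega

lemma neg_one_pow_par (a b : ℕ) (h : a % 2 = b % 2) : ((-1 : ℤ)) ^ a = (-1) ^ b := by
  rcases Nat.even_or_odd a with ha | ha
  · rw [ha.neg_one_pow, (Nat.even_iff.mpr (by have := Nat.even_iff.mp ha; omega)).neg_one_pow]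
  · rw [ha.neg_one_pow, (Nat.odd_iff.mpr (by have := Nat.odd_iff.mp ha; omega)).neg_one_pow]

lemma card_filter_mem {n k : ℕ} {i : Fin k → ℕ} (hinj : Function.Injective i)
    (hb : ∀ j, 1 ≤ i j ∧ i j ≤ n + 1) :
    ((Finset.Icc 1 (n + 1)).filter fun s => ∃ j, i j = s).card = k := by
  have himg : (Finset.Icc 1 (n + 1)).filter (fun s => ∃ j, i j = s)
      = Finset.image i Finset.univ := by
    ext s
    simp only [Finset.mem_filter, Finset.mem_Icc, Finset.mem_image, Finset.mem_univ, true_and]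
    constructor
    · rintro ⟨-, j, rfl⟩; exact ⟨j, rfl⟩
    · rintro ⟨j, rfl⟩; exact ⟨hb j, j, rfl⟩
  rw [himg, Finset.card_image_of_injective _ hinj, Finset.card_univ, Fintype.card_fin]

lemma card_filter_not_mem {n k : ℕ} {i : Fin k → ℕ} (hinj : Function.Injective i)
    (hb : ∀ j, 1 ≤ i j ∧ i j ≤ n + 1) :
    ((Finset.Icc 1 (n + 1)).filter fun s => ¬∃ j, i j = s).card = n + 1 - k := by
  have h1 := Finset.card_filter_add_card_filter_not (s := Finset.Icc 1 (n + 1))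
    (fun s => ∃ j, i j = s)
  rw [card_filter_mem hinj hb, Nat.card_Icc] at h1
  omega

/-- extending `n` by one when `n+1` is not a value of the tuple -/
lemma hatAlt_extend {n k : ℕ} (ε : ℕ → ℤ) {i : Fin k → ℕ} (hA : Adm n k 1 i) :
    hatAltSum (n + 1) ε i = (-1 : ℤ) ^ (n + 1 + k) * ε (n + 1) + hatAltSum n ε i := by
  have hkn : k ≤ n := adm_k_le hA
  have hnot : ¬∃ j, i j = n + 1 := by
    rintro ⟨j, hj⟩; have := (hA.2.1 j).2; omega
  have hb : ∀ j, 1 ≤ i j ∧ i j ≤ n + 1 := fun j => ⟨(hA.2.1 j).1, by have := (hA.2.1 j).2; omega⟩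
  rw [hatAltSum, Icc1succ, Finset.sum_insert (by simp)]
  rw [if_neg hnot, card_filter_not_mem (adm_inj hA) hb,
    neg_one_pow_par (n + 1 - k) (n + 1 + k) (by omega)]
  rfl

/-- restricting when the last value is `n+1` -/
lemma hatAlt_init {n k : ℕ} (ε : ℕ → ℤ) {i : Fin (k + 1) → ℕ}
    (hlast : i (Fin.last k) = n + 1) (hb : ∀ j : Fin k, i (Fin.castSucc j) ≤ n) :
    hatAltSum (n + 1) ε i = hatAltSum n ε (Fin.init i) := by
  have hiff : ∀ s, s ≤ n → ((∃ j, i j = s) ↔ (∃ j, Fin.init i j = s)) := by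
    intro s hs
    constructor
    · rintro ⟨j, rfl⟩
      induction j using Fin.lastCases with
      | last => omega
      | cast j0 => exact ⟨j0, rfl⟩
    · rintro ⟨j, rfl⟩
      exact ⟨Fin.castSucc j, rfl⟩
  rw [hatAltSum, Icc1succ, Finset.sum_insert (by simp),
    if_pos ⟨Fin.last k, hlast⟩, zero_add]
  apply Finset.sum_congr rfl
  intro t ht
  have ht' : t ≤ n := (Finset.mem_Icc.mp ht).2
  have h2 : ((Finset.Icc 1 t).filter fun s => ¬∃ j, i j = s)
      = ((Finset.Icc 1 t).filter fun s => ¬∃ j, Fin.init i j = s) := by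
    apply Finset.filter_congr
    intro s hs
    exact not_congr (hiff s (le_trans (Finset.mem_Icc.mp hs).2 ht'))
  exact if_congr (hiff t ht') rfl (by rw [h2])

lemma adm_init {n k : ℕ} {i : Fin (k + 1) → ℕ} (hA : Adm (n + 1) (k + 1) 1 i)
    (hlast : i (Fin.last k) = n + 1) : Adm n k 1 (Fin.init i) := by
  refine ⟨?_, ?_, ?_⟩
  · intro j j' hjj
    exact hA.1 _ _ (Fin.castSucc_lt_castSucc_iff.mpr hjj)
  · intro j
    refine ⟨(hA.2.1 _).1, ?_⟩
    have h1 := hA.1 (Fin.castSucc j) (Fin.last k) (Fin.castSucc_lt_last j)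
    have h2 : Fin.init i j = i (Fin.castSucc j) := rfl
    omega
  · intro j
    have h2 : Fin.init i j = i (Fin.castSucc j) := rfl
    rw [h2]
    simpa using hA.2.2 (Fin.castSucc j)

lemma adm_snoc {n k : ℕ} {i : Fin k → ℕ} (hA : Adm n k 1 i)
    (hpar : (n + 1) % 2 = (k + 1) % 2) :
    Adm (n + 1) (k + 1) 1 (Fin.snoc i (n + 1)) := by
  refine ⟨?_, ?_, ?_⟩
  · intro j j' hjj'
    induction j' using Fin.lastCases with
    | last =>
        have hj : j ≠ Fin.last k := ne_of_lt hjj'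
        obtain ⟨j0, rfl⟩ := Fin.exists_castSucc_eq.mpr hj
        simp only [Fin.snoc_castSucc, Fin.snoc_last]
        have := (hA.2.1 j0).2; omega
    | cast j0' =>
        have hj : j ≠ Fin.last k := by
          intro h; rw [h] at hjj'
          exact absurd hjj' (not_lt.mpr (Fin.le_last _))
        obtain ⟨j0, rfl⟩ := Fin.exists_castSucc_eq.mpr hj
        simp only [Fin.snoc_castSucc]
        exact hA.1 j0 j0' (Fin.castSucc_lt_castSucc_iff.mp hjj')
  · intro j
    induction j using Fin.lastCases with
    | last => simp only [Fin.snoc_last]; omega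
    | cast j0 =>
        simp only [Fin.snoc_castSucc]
        have := hA.2.1 j0; omega
  · intro j
    induction j using Fin.lastCases with
    | last => simpa using hpar
    | cast j0 => simpa using hA.2.2 j0

lemma last_eq {n k : ℕ} {i : Fin (k + 1) → ℕ} (hA : Adm (n + 1) (k + 1) 1 i)
    (hnp : ¬∀ j, i j ≤ n) :
    i (Fin.last k) = n + 1 ∧ ∀ j : Fin k, i (Fin.castSucc j) ≤ n := by
  obtain ⟨j, hj⟩ := not_forall.mp hnp
  have hje : i j = n + 1 := by have := (hA.2.1 j).2; omega
  have hjl : j = Fin.last k := by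
    by_contra h
    obtain ⟨j0, rfl⟩ := Fin.exists_castSucc_eq.mpr h
    have h1 := hA.1 _ _ (Fin.castSucc_lt_last j0)
    have h2 := (hA.2.1 (Fin.last k)).2
    omega
  subst hjl
  exact ⟨hje, fun j0 => by have := hA.1 _ _ (Fin.castSucc_lt_last j0); omega⟩

lemma cT_succ (n k : ℕ) (ε : ℕ → ℤ) (M : ℂ) (hM0 : M ≠ 0) :
    cT (n + 1) k ε M = M ^ ((-1 : ℤ) ^ (n + 1 + k) * ε (n + 1)) * cT n k ε M +
      (if (n + 1) % 2 = k % 2 ∧ 1 ≤ k then (ε (n + 1) : ℂ) * cT n (k - 1) ε M else 0) := by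
  rw [cT_eq_pi (n + 1) k ε M,
    ← Finset.sum_filter_add_sum_filter_not (Fintype.piFinset fun _ : Fin k =>
      Finset.range (n + 2)) (fun i => ∀ j, i j ≤ n) (term (n + 1) ε M k)]
  congr 1
  · -- part A
    have hset : (Fintype.piFinset fun _ : Fin k => Finset.range (n + 2)).filter
        (fun i => ∀ j, i j ≤ n) = Fintype.piFinset (fun _ : Fin k => Finset.range (n + 1)) := by
      ext i
      simp only [Finset.mem_filter, Fintype.mem_piFinset, Finset.mem_range]
      constructor
      · rintro ⟨h1, h2⟩ j; have := h1 j; have := h2 j; omega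
      · intro h; exact ⟨fun j => by have := h j; omega, fun j => by have := h j; omega⟩
    rw [hset, cT_eq_pi n k, Finset.mul_sum]
    apply Finset.sum_congr rfl
    intro i hi
    simp only [Fintype.mem_piFinset, Finset.mem_range] at hi
    by_cases hA : Adm n k 1 i
    · have hA' : Adm (n + 1) k 1 i :=
        ⟨hA.1, fun j => ⟨(hA.2.1 j).1, by have := (hA.2.1 j).2; omega⟩, hA.2.2⟩
      rw [term, term, if_pos hA', if_pos hA, hatAlt_extend ε hA, zpow_add₀ hM0]
      ring
    · have hA' : ¬Adm (n + 1) k 1 i := by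
        intro h
        exact hA ⟨h.1, fun j => ⟨(h.2.1 j).1, by have := hi j; omega⟩, h.2.2⟩
      rw [term, term, if_neg hA', if_neg hA, mul_zero]
  · -- part B
    cases k with
    | zero =>
        rw [if_neg (by omega)]
        apply Finset.sum_eq_zero
        intro i hi
        exact absurd (fun j : Fin 0 => j.elim0) (Finset.mem_filter.mp hi).2
    | succ k' =>
        by_cases hpar : (n + 1) % 2 = (k' + 1) % 2
        · rw [if_pos ⟨hpar, by omega⟩]
          have hk : k' + 1 - 1 = k' := rfl
          rw [hk, cT_eq_pi n k' ε M, Finset.mul_sum]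
          simp only [term, mul_ite, mul_zero]
          rw [← Finset.sum_filter, ← Finset.sum_filter]
          refine Finset.sum_bij' (i := fun a _ => Fin.init a) (j := fun a _ => Fin.snoc a (n + 1)) ?_ ?_ ?_ ?_ ?_
          · -- hi
            intro a ha
            simp only [Finset.mem_filter, Fintype.mem_piFinset, Finset.mem_range] at ha ⊢
            obtain ⟨⟨ham, hnp⟩, hA⟩ := ha
            obtain ⟨hlast, hle⟩ := last_eq hA hnp
            refine ⟨fun j => ?_, adm_init hA hlast⟩
            have h1 := hle j
            have h2 : Fin.init a j = a (Fin.castSucc j) := rfl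
            omega
          · -- hj
            intro a ha
            simp only [Finset.mem_filter, Fintype.mem_piFinset, Finset.mem_range] at ha ⊢
            obtain ⟨ham, hA⟩ := ha
            refine ⟨⟨?_, ?_⟩, adm_snoc hA hpar⟩
            · intro j
              induction j using Fin.lastCases with
              | last => simp
              | cast j0 => simp only [Fin.snoc_castSucc]; have := ham j0; omega
            · intro hall
              have := hall (Fin.last k')
              simp at this
          · -- left inverse
            intro a ha
            simp only [Finset.mem_filter] at ha
            obtain ⟨⟨ham, hnp⟩, hA⟩ := ha
            obtain ⟨hlast, -⟩ := last_eq hA hnp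
            funext j
            induction j using Fin.lastCases with
            | last => simp [hlast]
            | cast j0 => simp only [Fin.snoc_castSucc]; rfl
          · -- right inverse
            intro a _
            exact Fin.init_snoc _ _
          · -- values
            intro a ha
            simp only [Finset.mem_filter] at ha
            obtain ⟨⟨ham, hnp⟩, hA⟩ := ha
            obtain ⟨hlast, hle⟩ := last_eq hA hnp
            have hinit : ∀ j : Fin k', a (Fin.castSucc j) = Fin.init a j := fun _ => rfl
            rw [Fin.prod_univ_castSucc, hatAlt_init ε hlast hle, hlast]
            simp only [hinit]
            ring
        · rw [if_neg (by tauto)]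
          apply Finset.sum_eq_zero
          intro i hi
          simp only [Finset.mem_filter] at hi
          rw [term, if_neg]
          intro hA
          obtain ⟨hlast, -⟩ := last_eq hA hi.2
          apply hpar
          have := hA.2.2 (Fin.last k')
          rw [hlast] at this
          simpa using this

noncomputable def Fg (n : ℕ) (ε : ℕ → ℤ) (M lamT : ℂ) : ℂ :=
  ∑ k ∈ Finset.range (n + 1), cT n (2 * k) ε M * lamT ^ k

noncomputable def Gg (n : ℕ) (ε : ℕ → ℤ) (M lamT : ℂ) : ℂ :=
  ∑ k ∈ Finset.range (n + 1), cT n (2 * k + 1) ε M * lamT ^ k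

lemma Fg_succ_odd {n : ℕ} (ε : ℕ → ℤ) {M : ℂ} (lamT : ℂ) (hM0 : M ≠ 0)
    (hpar : (n + 1) % 2 = 1) :
    Fg (n + 1) ε M lamT = M ^ (-ε (n + 1)) * Fg n ε M lamT := by
  unfold Fg
  rw [Finset.sum_range_succ, cT_of_gt (by omega), zero_mul, add_zero, Finset.mul_sum]
  apply Finset.sum_congr rfl
  intro k _
  rw [cT_succ n (2 * k) ε M hM0, if_neg (by omega), add_zero,
    (Nat.odd_iff.mpr (by omega) : Odd (n + 1 + 2 * k)).neg_one_pow, neg_one_mul]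
  ring

lemma Gg_succ_odd {n : ℕ} (ε : ℕ → ℤ) {M : ℂ} (lamT : ℂ) (hM0 : M ≠ 0)
    (hpar : (n + 1) % 2 = 1) :
    Gg (n + 1) ε M lamT = M ^ (ε (n + 1)) * Gg n ε M lamT +
      (ε (n + 1) : ℂ) * Fg n ε M lamT := by
  unfold Fg Gg
  have h1 : ∀ k, cT (n + 1) (2 * k + 1) ε M
      = M ^ (ε (n + 1)) * cT n (2 * k + 1) ε M + (ε (n + 1) : ℂ) * cT n (2 * k) ε M := by
    intro k
    rw [cT_succ n (2 * k + 1) ε M hM0, if_pos (by omega),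
      (Nat.even_iff.mpr (by omega) : Even (n + 1 + (2 * k + 1))).neg_one_pow, one_mul,
      (by omega : 2 * k + 1 - 1 = 2 * k)]
  simp only [h1, add_mul, Finset.sum_add_distrib]
  rw [Finset.sum_range_succ, cT_of_gt (by omega), Finset.sum_range_succ (f := fun k => (ε (n+1) : ℂ) * cT n (2 * k) ε M * lamT ^ k), cT_of_gt (by omega), Finset.mul_sum, Finset.mul_sum]
  simp only [mul_zero, zero_mul, add_zero, mul_assoc]

lemma Fg_succ_even {n : ℕ} (ε : ℕ → ℤ) {M : ℂ} (lamT : ℂ) (hM0 : M ≠ 0)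
    (hpar : (n + 1) % 2 = 0) :
    Fg (n + 1) ε M lamT = M ^ (ε (n + 1)) * Fg n ε M lamT +
      (ε (n + 1) : ℂ) * lamT * Gg n ε M lamT := by
  unfold Fg Gg
  have h1 : ∀ k, cT (n + 1) (2 * k) ε M
      = M ^ (ε (n + 1)) * cT n (2 * k) ε M
        + (if 1 ≤ k then (ε (n + 1) : ℂ) * cT n (2 * k - 1) ε M else 0) := by
    intro k
    rw [cT_succ n (2 * k) ε M hM0,
      (Nat.even_iff.mpr (by omega) : Even (n + 1 + 2 * k)).neg_one_pow, one_mul]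
    congr 1
    by_cases hk : 1 ≤ k
    · rw [if_pos (by omega), if_pos hk]
    · rw [if_neg (by omega), if_neg hk]
  simp only [h1, add_mul, Finset.sum_add_distrib]
  congr 1
  · rw [Finset.sum_range_succ, cT_of_gt (by omega), Finset.mul_sum]
    simp only [mul_zero, zero_mul, add_zero, mul_assoc]
  · rw [Finset.sum_range_succ']
    have h0 : (if (1:ℕ) ≤ 0 then (ε (n + 1) : ℂ) * cT n (2 * 0 - 1) ε M else 0) * lamT ^ 0 = 0 := by
      rw [if_neg (by omega)]; ring
    rw [h0, add_zero, Finset.mul_sum]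
    apply Finset.sum_congr rfl
    intro k _
    rw [if_pos (by omega : (1:ℕ) ≤ k + 1), (by omega : 2 * (k + 1) - 1 = 2 * k + 1), pow_succ]
    ring

lemma Gg_succ_even {n : ℕ} (ε : ℕ → ℤ) {M : ℂ} (lamT : ℂ) (hM0 : M ≠ 0)
    (hpar : (n + 1) % 2 = 0) :
    Gg (n + 1) ε M lamT = M ^ (-ε (n + 1)) * Gg n ε M lamT := by
  unfold Gg
  rw [Finset.sum_range_succ, cT_of_gt (by omega), zero_mul, add_zero, Finset.mul_sum]
  apply Finset.sum_congr rfl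
  intro k _
  rw [cT_succ n (2 * k + 1) ε M hM0, if_neg (by omega), add_zero,
    (Nat.odd_iff.mpr (by omega) : Odd (n + 1 + (2 * k + 1))).neg_one_pow, neg_one_mul]
  ring

lemma mul_expand (A : Mat) (a b c d : ℂ) :
    (A * !![a, b; c, d]) 0 0 = A 0 0 * a + A 0 1 * c ∧
    (A * !![a, b; c, d]) 0 1 = A 0 0 * b + A 0 1 * d := by
  constructor <;> simp [Matrix.mul_apply, Fin.sum_univ_two]

lemma cT_zero_zero (ε : ℕ → ℤ) (M : ℂ) : cT 0 0 ε M = 1 := by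
  have h1 : ∀ i : Fin 0 → Fin 1,
      (if Adm 0 0 1 (fun j => ((i j : ℕ))) then
        (∏ j : Fin 0, (ε (i j : ℕ) : ℂ)) * M ^ hatAltSum 0 ε (fun j => (i j : ℕ)) else 0) = 1 := by
    intro i
    rw [if_pos ⟨fun j => j.elim0, fun j => j.elim0, fun j => j.elim0⟩]
    simp [hatAltSum]
  rw [cT, Finset.sum_congr rfl (fun i _ => h1 i), Finset.sum_const, Finset.card_univ]
  simp

lemma word_entries (M : ℂ) (hM0 : M ≠ 0) (lam : ℂ) (ε : ℕ → ℤ) (n : ℕ)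
    (hε : ∀ i, 1 ≤ i → i ≤ n → ε i = 1 ∨ ε i = -1) :
    (Wword (n + 1) ε !![M, 1; 0, M⁻¹] !![M, 0; lam, M⁻¹]) 0 0
      = Fg n ε M (lam + (M - M⁻¹) ^ 2) + (M - M⁻¹) * Gg n ε M (lam + (M - M⁻¹) ^ 2)
    ∧ (Wword (n + 1) ε !![M, 1; 0, M⁻¹] !![M, 0; lam, M⁻¹]) 0 1
      = Gg n ε M (lam + (M - M⁻¹) ^ 2) := by
  have hMi : M * M⁻¹ = 1 := mul_inv_cancel₀ hM0
  set X : Mat := !![M, 1; 0, M⁻¹] with hX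
  set Y : Mat := !![M, 0; lam, M⁻¹] with hY
  have hXinv : X⁻¹ = !![M⁻¹, -1; 0, M] := by
    apply Matrix.inv_eq_right_inv
    rw [hX, Matrix.mul_fin_two, Matrix.one_fin_two]
    congr 1 <;> field_simp <;> norm_num
  have hYinv : Y⁻¹ = !![M⁻¹, 0; -lam, M] := by
    apply Matrix.inv_eq_right_inv
    rw [hY, Matrix.mul_fin_two, Matrix.one_fin_two]
    congr 1 <;> field_simp <;> ring
  set lamT : ℂ := lam + (M - M⁻¹) ^ 2 with hlamT
  have hz1 : M ^ (-(1:ℤ)) = M⁻¹ := by rw [zpow_neg, zpow_one]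
  have hz2 : M ^ ((1:ℤ)) = M := zpow_one M
  induction n with
  | zero =>
      have h1 : Wword 1 ε X Y = 1 := by
        unfold Wword; simp
      rw [h1]
      have hF : Fg 0 ε M lamT = 1 := by
        rw [Fg, Finset.sum_range_one, cT_zero_zero]; ring
      have hG : Gg 0 ε M lamT = 0 := by
        rw [Gg, Finset.sum_range_one, cT_of_gt (by omega)]; ring
      rw [hF, hG]
      constructor <;> simp [Matrix.one_apply]
  | succ n ih =>
      obtain ⟨h00, h01⟩ := ih (fun i h1 h2 => hε i h1 (by omega))
      have hstep : Wword (n + 2) ε X Y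
          = Wword (n + 1) ε X Y * ((if (n + 1) % 2 = 1 then X else Y) ^ ε (n + 1)) := by
        unfold Wword
        rw [show n + 2 - 1 = n + 1 from rfl, show n + 1 - 1 = n from rfl,
          List.range_succ, List.map_append, List.prod_append]
        simp
      rcases hε (n + 1) (by omega) (le_refl _) with he | he <;>
        rcases Nat.mod_two_eq_zero_or_one (n + 1) with hp | hp
      · -- ε = 1, n+1 even : letter Y
        have hA : (if (n + 1) % 2 = 1 then X else Y) ^ ε (n + 1) = Y := by
          rw [if_neg (by omega), he, zpow_one]
        rw [hstep, hA, hY]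
        constructor
        · rw [(mul_expand _ _ _ _ _).1, h00, h01, Fg_succ_even ε lamT hM0 hp,
            Gg_succ_even ε lamT hM0 hp, he, hlamT]
          push_cast [hz1, hz2]
          field_simp <;> ring
        · rw [(mul_expand _ _ _ _ _).2, h00, h01, Gg_succ_even ε lamT hM0 hp, he]
          push_cast [hz1, hz2]
          field_simp <;> ring
      · -- ε = 1, n+1 odd : letter X
        have hA : (if (n + 1) % 2 = 1 then X else Y) ^ ε (n + 1) = X := by
          rw [if_pos hp, he, zpow_one]
        rw [hstep, hA, hX]
        constructor
        · rw [(mul_expand _ _ _ _ _).1, h00, h01, Fg_succ_odd ε lamT hM0 hp,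
            Gg_succ_odd ε lamT hM0 hp, he]
          push_cast [hz1, hz2]
          field_simp <;> ring
        · rw [(mul_expand _ _ _ _ _).2, h00, h01, Gg_succ_odd ε lamT hM0 hp, he]
          push_cast [hz1, hz2]
          field_simp <;> ring
      · -- ε = -1, n+1 even : letter Y⁻¹
        have hA : (if (n + 1) % 2 = 1 then X else Y) ^ ε (n + 1) = !![M⁻¹, 0; -lam, M] := by
          rw [if_neg (by omega), he, Matrix.zpow_neg_one, hYinv]
        rw [hstep, hA]
        constructor
        · rw [(mul_expand _ _ _ _ _).1, h00, h01, Fg_succ_even ε lamT hM0 hp,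
            Gg_succ_even ε lamT hM0 hp, he, hlamT]
          push_cast [hz1, hz2]
          field_simp <;> ring
        · rw [(mul_expand _ _ _ _ _).2, h00, h01, Gg_succ_even ε lamT hM0 hp, he]
          push_cast [hz1, hz2]
          field_simp <;> ring
      · -- ε = -1, n+1 odd : letter X⁻¹
        have hA : (if (n + 1) % 2 = 1 then X else Y) ^ ε (n + 1) = !![M⁻¹, -1; 0, M] := by
          rw [if_pos hp, he, Matrix.zpow_neg_one, hXinv]
        rw [hstep, hA]
        constructor
        · rw [(mul_expand _ _ _ _ _).1, h00, h01, Fg_succ_odd ε lamT hM0 hp,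
            Gg_succ_odd ε lamT hM0 hp, he]
          push_cast [hz1, hz2]
          field_simp <;> ring
        · rw [(mul_expand _ _ _ _ _).2, h00, h01, Gg_succ_odd ε lamT hM0 hp, he]
          push_cast [hz1, hz2]
          field_simp <;> ring

/-- The entries of `W` satisfy
`W₁₁ = f_{α−1}(M,λ̃) + z·g_{α−1}(M,λ̃)` and `W₁₂ = g_{α−1}(M,λ̃)`; equivalently the
Riley polynomial `W₁₁ − z·W₁₂` of `G(ε)` equals `f_{α−1}(M,λ̃)`. -/
theorem W_entries_fg (M : ℂ) (hM0 : M ≠ 0) (hM1 : M ≠ 1) (hMneg1 : M ≠ -1)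
    (lam : ℂ) (α : ℕ) (hodd : Odd α) (hα : 3 ≤ α) (ε : ℕ → ℤ)
    (hε : ∀ i, 1 ≤ i → i ≤ α - 1 → ε i = 1 ∨ ε i = -1)
    (hsym : ∀ i, 1 ≤ i → i ≤ α - 1 → ε i = ε (α - i))
    (lamT : ℂ) (hlamT : lamT = lam + (M - M⁻¹) ^ 2)
    (f g : ℂ)
    (hf : f = ∑ k ∈ Finset.range ((α - 1) / 2 + 1), cT (α - 1) (2 * k) ε M * lamT ^ k)
    (hg : g = ∑ k ∈ Finset.range ((α - 3) / 2 + 1), cT (α - 1) (2 * k + 1) ε M * lamT ^ k)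
    (W : Mat) (hW : W = Wword α ε !![M, 1; 0, M⁻¹] !![M, 0; lam, M⁻¹]) :
    W 0 0 = f + (M - M⁻¹) * g ∧ W 0 1 = g := by
  subst hlamT hW hf hg
  have hn1 : (α - 1) + 1 = α := by omega
  have hodd' : α % 2 = 1 := Nat.odd_iff.mp hodd
  obtain ⟨hA, hB⟩ := word_entries M hM0 lam ε (α - 1) hε
  rw [hn1] at hA hB
  have hFf : Fg (α - 1) ε M (lam + (M - M⁻¹) ^ 2)
      = ∑ k ∈ Finset.range ((α - 1) / 2 + 1),
          cT (α - 1) (2 * k) ε M * (lam + (M - M⁻¹) ^ 2) ^ k := by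
    rw [Fg]
    symm
    apply Finset.sum_subset (Finset.range_subset_range.mpr (by omega))
    intro k hk hk2
    simp only [Finset.mem_range] at hk hk2
    rw [cT_of_gt (by omega), zero_mul]
  have hGg : Gg (α - 1) ε M (lam + (M - M⁻¹) ^ 2)
      = ∑ k ∈ Finset.range ((α - 3) / 2 + 1),
          cT (α - 1) (2 * k + 1) ε M * (lam + (M - M⁻¹) ^ 2) ^ k := by
    rw [Gg]
    symm
    apply Finset.sum_subset (Finset.range_subset_range.mpr (by omega))
    intro k hk hk2
    simp only [Finset.mem_range] at hk hk2
    rw [cT_of_gt (by omega), zero_mul]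
  constructor
  · rw [hA, hFf, hGg]
  · rw [hB, hGg]
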